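/- arXiv:2309.15168 — 6 statements merged into one kernel-verified Lean document; each statement's English description precedes it below -/
import Mathlib

section
/- Let u, v be natural numbers with u, v ≥ 3 and 1/u + 1/v ≤ 1/2, and set w = u. Then B := det b(u,v,w=u) = sin⁴(π/u) − cos²(π/v) < 0; in particular the Coxeter–Schläfli matrix b(u,v,u) is invertible. -/
/-!
Expanding the tridiagonal determinant with `w = u` gives `(1 - cos² (π/u))² - cos² (π/v)`.
Since `π/u + π/v ≤ π/2`, we have `sin (π/u) ≤ cos (π/v)`, and `sin⁴ < sin²` because
`0 < π/u < π/2`.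
-/

open Real Matrix

/-- The Coxeter–Schläfli matrix `b(u,v,w)` of the orthoscheme. -/
noncomputable def CSMatrix (u v w : ℕ) : Matrix (Fin 4) (Fin 4) ℝ :=
  !![1, -Real.cos (Real.pi / u), 0, 0;
     -Real.cos (Real.pi / u), 1, -Real.cos (Real.pi / v), 0;
     0, -Real.cos (Real.pi / v), 1, -Real.cos (Real.pi / w);
     0, 0, -Real.cos (Real.pi / w), 1]

theorem det_fin_four_tridiagonal {R : Type*} [CommRing R] (a b c : R) :
    !![1, a, 0, 0; a, 1, b, 0; 0, b, 1, c; 0, 0, c, 1].det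
      = 1 - a ^ 2 - b ^ 2 - c ^ 2 + a ^ 2 * c ^ 2 := by
  simp only [det_succ_row_zero, Fin.sum_univ_succ, Fin.succAbove, of_apply, submatrix_apply, cons_val,
    det_unique, Fin.default_eq_zero, Fin.reduceSucc, Fin.coe_ofNat_eq_mod, ↓reduceIte,
    Fin.reduceCastSucc, Fin.reduceLT]
  ring

theorem CSMatrix_det (u v w : ℕ) :
    (CSMatrix u v w).det = 1 - cos (π / u) ^ 2 - cos (π / v) ^ 2 - cos (π / w) ^ 2
      + cos (π / u) ^ 2 * cos (π / w) ^ 2 := by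
  rw [CSMatrix, det_fin_four_tridiagonal]
  ring

theorem CSMatrix_det_self (u v : ℕ) :
    (CSMatrix u v u).det = sin (π / u) ^ 4 - cos (π / v) ^ 2 := by
  rw [CSMatrix_det, show sin (π / u) ^ 4 = (sin (π / u) ^ 2) ^ 2 by ring, sin_sq]
  ring

theorem sin_pow_four_lt_sin_sq {x : ℝ} (h0 : 0 < x) (hx : x < π / 2) :
    sin x ^ 4 < sin x ^ 2 := by
  have hsin : 0 < sin x := sin_pos_of_pos_of_lt_pi h0 (by linarith [pi_pos])
  have hcos : 0 < cos x := cos_pos_of_mem_Ioo ⟨by linarith, hx⟩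
  have hsin_sq : sin x ^ 2 < 1 := by nlinarith [sin_sq_add_cos_sq x]
  nlinarith [pow_pos hsin 2]

theorem sin_le_cos_of_add_le_pi_div_two {x y : ℝ} (hx : -(π / 2) ≤ x) (hy : 0 ≤ y)
    (hxy : x + y ≤ π / 2) : sin x ≤ cos y := by
  rw [← sin_pi_div_two_sub]
  exact sin_le_sin_of_le_of_le_pi_div_two hx (by linarith) (by linarith)

theorem det_CSMatrix_symmetric_neg_general (u v : ℕ) (hu : 3 ≤ u)
    (huv : (1 : ℝ) / u + 1 / v ≤ 1 / 2) :
    (CSMatrix u v u).det = Real.sin (Real.pi / u) ^ 4 - Real.cos (Real.pi / v) ^ 2 ∧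
    (CSMatrix u v u).det < 0 ∧
    IsUnit (CSMatrix u v u) := by
  have hdet := CSMatrix_det_self u v
  have hu' : (3 : ℝ) ≤ u := by exact_mod_cast hu
  have hθ_pos : 0 < π / u := by positivity
  have hθ_lt : π / u < π / 2 := div_lt_div_of_pos_left pi_pos two_pos (by linarith)
  have hangles : π / u + π / v ≤ π / 2 := by
    calc π / u + π / v = π * (1 / u + 1 / v) := by ring
      _ ≤ π * (1 / 2) := mul_le_mul_of_nonneg_left huv pi_pos.le
      _ = π / 2 := by ring
  have hsin_le : sin (π / u) ≤ cos (π / v) :=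
    sin_le_cos_of_add_le_pi_div_two (by linarith) (by positivity) hangles
  have hneg : sin (π / u) ^ 4 - cos (π / v) ^ 2 < 0 := sub_neg.mpr <| calc
    sin (π / u) ^ 4 < sin (π / u) ^ 2 := sin_pow_four_lt_sin_sq hθ_pos hθ_lt
    _ ≤ cos (π / v) ^ 2 := pow_le_pow_left₀ (sin_pos_of_pos_of_lt_pi hθ_pos (by linarith)).le hsin_le 2
  refine ⟨hdet, hdet ▸ hneg, ?_⟩
  rw [isUnit_iff_isUnit_det, isUnit_iff_ne_zero, hdet]
  exact hneg.ne

theorem det_CSMatrix_symmetric_neg (u v : ℕ) (hu : 3 ≤ u) (hv : 3 ≤ v)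
    (huv : (1 : ℝ) / u + 1 / v ≤ 1 / 2) :
    (CSMatrix u v u).det = Real.sin (Real.pi / u) ^ 4 - Real.cos (Real.pi / v) ^ 2 ∧
    (CSMatrix u v u).det < 0 ∧
    IsUnit (CSMatrix u v u) :=
  det_CSMatrix_symmetric_neg_general u v hu huv
end

section
/- Let u, v be natural numbers with u, v ≥ 3 and 1/u + 1/v < 1/2, set w = u, and let A := b(u,v,u)⁻¹. Then A₀₀ = A₃₃ > 0 and A₁₁ = A₂₂ < 0; that is, the vertices A₀ and A₃ of the orthoscheme are outer points of the model while A₁ and A₂ are proper (interior) points. -/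
open Real Matrix

/-- `A := b(u,v,w)⁻¹`. -/
noncomputable def Ainv (u v w : ℕ) : Matrix (Fin 4) (Fin 4) ℝ := (CSMatrix u v w)⁻¹

lemma inv_explicit (a c : ℝ) (hd : (1 - a^2)^2 - c^2 ≠ 0) :
    (!![1, -a, 0, 0; -a, 1, -c, 0; 0, -c, 1, -a; 0, 0, -a, 1] :
      Matrix (Fin 4) (Fin 4) ℝ)⁻¹ =
    ((1 - a^2)^2 - c^2)⁻¹ •
      !![1 - a^2 - c^2, a*(1-a^2), a*c, a^2*c;
         a*(1-a^2), 1-a^2, c, a*c;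
         a*c, c, 1-a^2, a*(1-a^2);
         a^2*c, a*c, a*(1-a^2), 1 - a^2 - c^2] := by
  apply Matrix.inv_eq_right_inv
  ext i j
  fin_cases i <;> fin_cases j <;>
    simp [Matrix.mul_apply, Fin.sum_univ_four, Matrix.one_apply] <;>
    field_simp <;> ring

set_option maxHeartbeats 2000000 in
theorem outer_and_proper_vertices (u v : ℕ) (hu : 3 ≤ u) (hv : 3 ≤ v)
    (huv : (1 : ℝ) / u + 1 / v < 1 / 2) :
    Ainv u v u 0 0 = Ainv u v u 3 3 ∧ 0 < Ainv u v u 3 3 ∧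
    Ainv u v u 1 1 = Ainv u v u 2 2 ∧ Ainv u v u 2 2 < 0 := by
  set a := Real.cos (Real.pi / u) with ha
  set c := Real.cos (Real.pi / v) with hc
  set s := Real.sin (Real.pi / u) with hs
  have hu0 : (0:ℝ) < u := by positivity
  have hv0 : (0:ℝ) < v := by positivity
  have hpi := Real.pi_pos
  have hpu0 : 0 < Real.pi / u := by positivity
  have hpv0 : 0 < Real.pi / v := by positivity
  have hsum : Real.pi / u + Real.pi / v < Real.pi / 2 := by
    have h := mul_lt_mul_of_pos_left huv hpi
    calc Real.pi / u + Real.pi / v = Real.pi * (1/u + 1/v) := by ring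
    _ < Real.pi * (1/2) := h
    _ = Real.pi / 2 := by ring
  -- s < c
  have hsc : s < c := by
    have h1 : Real.cos (Real.pi / 2 - Real.pi / u) < c := by
      rw [hc]
      apply Real.cos_lt_cos_of_nonneg_of_le_pi hpv0.le
      · linarith [Real.pi_pos]
      · linarith
    rwa [Real.cos_pi_div_two_sub] at h1
  have hs0 : 0 < s := Real.sin_pos_of_pos_of_lt_pi hpu0 (by linarith)
  have hs1 : s ≤ 1 := Real.sin_le_one _
  have hsq : s^2 = 1 - a^2 := by
    have := Real.sin_sq_add_cos_sq (Real.pi / u)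
    nlinarith
  have hs2c : s^2 < c := lt_of_le_of_lt (by nlinarith) hsc
  have hd : (1 - a^2)^2 - c^2 < 0 := by
    have : (1 - a^2)^2 - c^2 = (s^2 - c) * (s^2 + c) := by rw [← hsq]; ring
    rw [this]
    apply mul_neg_of_neg_of_pos <;> nlinarith
  have hdne : (1 - a^2)^2 - c^2 ≠ 0 := hd.ne
  have hdinv : ((1 - a^2)^2 - c^2)⁻¹ < 0 := inv_lt_zero.mpr hd
  have hCS : CSMatrix u v u =
      !![1, -a, 0, 0; -a, 1, -c, 0; 0, -c, 1, -a; 0, 0, -a, 1] := rfl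
  have hA : Ainv u v u = ((1 - a^2)^2 - c^2)⁻¹ •
      !![1 - a^2 - c^2, a*(1-a^2), a*c, a^2*c;
         a*(1-a^2), 1-a^2, c, a*c;
         a*c, c, 1-a^2, a*(1-a^2);
         a^2*c, a*c, a*(1-a^2), 1 - a^2 - c^2] := by
    rw [Ainv, hCS, inv_explicit a c hdne]
  have h00 : Ainv u v u 0 0 = ((1 - a^2)^2 - c^2)⁻¹ * (1 - a^2 - c^2) := by
    rw [hA]; simp [Matrix.smul_apply]
  have h33 : Ainv u v u 3 3 = ((1 - a^2)^2 - c^2)⁻¹ * (1 - a^2 - c^2) := by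
    rw [hA]; simp [Matrix.smul_apply]
  have h11 : Ainv u v u 1 1 = ((1 - a^2)^2 - c^2)⁻¹ * (1 - a^2) := by
    rw [hA]; simp [Matrix.smul_apply]
  have h22 : Ainv u v u 2 2 = ((1 - a^2)^2 - c^2)⁻¹ * (1 - a^2) := by
    rw [hA]; simp [Matrix.smul_apply]
  have hsc2 : s^2 < c^2 := pow_lt_pow_left₀ hsc hs0.le (by norm_num)
  have hnum : 1 - a^2 - c^2 < 0 := by rw [← hsq] at *; linarith
  have hpos : 0 < 1 - a^2 := by rw [← hsq]; positivity
  refine ⟨h00.trans h33.symm, ?_, h11.trans h22.symm, ?_⟩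
  · rw [h33]; exact mul_pos_of_neg_of_neg hdinv hnum
  · rw [h22]; exact mul_neg_of_neg_of_pos hdinv hpos
end

section
/- Let u, v be natural numbers with u, v ≥ 3 and 1/u + 1/v < 1/2, set w = u, and let A := b(u,v,u)⁻¹. Then A₂₂A₃₃ − A₂₃² = A₂₂, and hence for Q := e₂ − (A₂₃/A₃₃)·e₃ one has ⟨Q,Q⟩ = A₂₂/A₃₃ = sin²(π/u)/(sin²(π/u) − cos²(π/v)). -/
open Real Matrix

/-- The point scalar product `⟨x,y⟩ := xᵀ A y` with `A = b(u,v,w)⁻¹`. -/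
noncomputable def ip (u v w : ℕ) (x y : Fin 4 → ℝ) : ℝ := x ⬝ᵥ (Ainv u v w).mulVec y

/-- The standard basis vector `e_i` of `ℝ⁴`. -/
noncomputable def e (i : Fin 4) : Fin 4 → ℝ := Pi.single i 1

/-- Explicit inverse of the symmetric tridiagonal matrix. -/
lemma cs_inv_explicit (c d : ℝ) (hdet : (1 - c ^ 2) ^ 2 - d ^ 2 ≠ 0) :
    (!![1, -c, 0, 0; -c, 1, -d, 0; 0, -d, 1, -c; 0, 0, -c, 1] :
        Matrix (Fin 4) (Fin 4) ℝ)⁻¹ =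
    ((1 - c ^ 2) ^ 2 - d ^ 2)⁻¹ •
      !![1 - c ^ 2 - d ^ 2, c * (1 - c ^ 2), c * d, c ^ 2 * d;
         c * (1 - c ^ 2), 1 - c ^ 2, d, c * d;
         c * d, d, 1 - c ^ 2, c * (1 - c ^ 2);
         c ^ 2 * d, c * d, c * (1 - c ^ 2), 1 - c ^ 2 - d ^ 2] := by
  apply inv_eq_right_inv
  ext i j
  fin_cases i <;> fin_cases j <;>
    simp [Matrix.mul_apply, Fin.sum_univ_four, Matrix.smul_apply] <;>
    field_simp <;> ring

theorem norm_of_Q (u v : ℕ) (hu : 3 ≤ u) (hv : 3 ≤ v)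
    (huv : (1 : ℝ) / u + 1 / v < 1 / 2) :
    Ainv u v u 2 2 * Ainv u v u 3 3 - (Ainv u v u 2 3) ^ 2 = Ainv u v u 2 2 ∧
    ip u v u (e 2 - (Ainv u v u 2 3 / Ainv u v u 3 3) • e 3)
        (e 2 - (Ainv u v u 2 3 / Ainv u v u 3 3) • e 3) =
      Ainv u v u 2 2 / Ainv u v u 3 3 ∧
    Ainv u v u 2 2 / Ainv u v u 3 3 =
      Real.sin (Real.pi / u) ^ 2 /
        (Real.sin (Real.pi / u) ^ 2 - Real.cos (Real.pi / v) ^ 2) := by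
  set c : ℝ := Real.cos (Real.pi / u) with hc
  set d : ℝ := Real.cos (Real.pi / v) with hd
  set s : ℝ := Real.sin (Real.pi / u) with hs
  have hu3 : (3 : ℝ) ≤ (u : ℝ) := by exact_mod_cast hu
  have hv3 : (3 : ℝ) ≤ (v : ℝ) := by exact_mod_cast hv
  have hupos : (0 : ℝ) < u := by linarith
  have hvpos : (0 : ℝ) < v := by linarith
  have hpi := Real.pi_pos
  have hxu : 0 < Real.pi / u := div_pos hpi hupos
  have hxv : 0 < Real.pi / v := div_pos hpi hvpos
  have hlt : Real.pi / u < Real.pi / 2 - Real.pi / v := by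
    have h1 : Real.pi / u = Real.pi * (1 / u) := by ring
    have h2 : Real.pi / v = Real.pi * (1 / v) := by ring
    have h3 : Real.pi / 2 = Real.pi * (1 / 2) := by ring
    rw [h1, h2, h3]
    nlinarith [mul_lt_mul_of_pos_left huv hpi]
  have hspos : 0 < s := by
    apply Real.sin_pos_of_pos_of_lt_pi hxu
    calc Real.pi / u < Real.pi / 2 - Real.pi / v := hlt
    _ < Real.pi := by linarith
  have hkey : s < d := by
    rw [hs, hd, ← Real.sin_pi_div_two_sub]
    apply Real.sin_lt_sin_of_lt_of_le_pi_div_two _ _ hlt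
    · linarith
    · linarith
  have hs1 : s ≤ 1 := Real.sin_le_one _
  have hsq : s ^ 2 = 1 - c ^ 2 := by
    have := Real.sin_sq_add_cos_sq (Real.pi / u)
    rw [← hs, ← hc] at this; linarith
  have hs2ltd : s ^ 2 < d := by nlinarith
  have hdet : (1 - c ^ 2) ^ 2 - d ^ 2 ≠ 0 := by nlinarith
  have h33n : 1 - c ^ 2 - d ^ 2 ≠ 0 := by nlinarith
  have hM : CSMatrix u v u =
      !![1, -c, 0, 0; -c, 1, -d, 0; 0, -d, 1, -c; 0, 0, -c, 1] := by
    rw [CSMatrix]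
  have hA : Ainv u v u = ((1 - c ^ 2) ^ 2 - d ^ 2)⁻¹ •
      !![1 - c ^ 2 - d ^ 2, c * (1 - c ^ 2), c * d, c ^ 2 * d;
         c * (1 - c ^ 2), 1 - c ^ 2, d, c * d;
         c * d, d, 1 - c ^ 2, c * (1 - c ^ 2);
         c ^ 2 * d, c * d, c * (1 - c ^ 2), 1 - c ^ 2 - d ^ 2] := by
    rw [Ainv, hM, cs_inv_explicit c d hdet]
  have e22 : Ainv u v u 2 2 = ((1 - c ^ 2) ^ 2 - d ^ 2)⁻¹ * (1 - c ^ 2) := by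
    rw [hA]; simp
  have e33 : Ainv u v u 3 3 = ((1 - c ^ 2) ^ 2 - d ^ 2)⁻¹ * (1 - c ^ 2 - d ^ 2) := by
    rw [hA]; simp
  have e23 : Ainv u v u 2 3 = ((1 - c ^ 2) ^ 2 - d ^ 2)⁻¹ * (c * (1 - c ^ 2)) := by
    rw [hA]; simp
  refine ⟨?_, ?_, ?_⟩
  · rw [e22, e33, e23]
    field_simp
    ring
  · rw [e22, e33, e23]
    simp only [ip, hA, e, Matrix.mulVec, Matrix.smul_apply, dotProduct,
      Fin.sum_univ_four, Pi.sub_apply, Pi.smul_apply, smul_eq_mul]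
    simp [Pi.single_apply]
    field_simp
    ring
  · rw [e22, e33, hsq]
    exact mul_div_mul_left _ _ (inv_ne_zero hdet)
end

section
/- Let u, v be natural numbers with u, v ≥ 3 and 1/u + 1/v < 1/2, set w = u, and let A := b(u,v,u)⁻¹. Then the midpoint vector F₁₂ := e₁ + e₂ satisfies ⟨F₁₂, F₁₂⟩ = 2(A₁₁ + A₁₂) < 0; that is, F₁₂ is a proper (interior) point. -/
open Real Matrix

/-!
With `α = π/u` and `β = π/v`, cofactor expansion of `b = b(u,v,u)` gives
`det b = (sin²α - cos β)(sin²α + cos β)`, `A₁₁ = A₂₂ = sin²α / det b` and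
`A₁₂ = A₂₁ = cos β / det b`, hence `⟨F₁₂,F₁₂⟩ = 2 (A₁₁ + A₁₂) = 2 / (sin²α - cos β)`.
The hypothesis says `α + β < π/2`, so `sin²α ≤ sin α = cos (π/2 - α) < cos β`.
-/

theorem add_single_dotProduct_mulVec_add_single {n : Type*} [Fintype n] [DecidableEq n]
    (M : Matrix n n ℝ) (i j : n) :
    (Pi.single i 1 + Pi.single j 1) ⬝ᵥ M *ᵥ (Pi.single i 1 + Pi.single j 1) =
      M i i + M i j + M j i + M j j := by
  simp only [mulVec_add, add_dotProduct, dotProduct_add, mulVec_single_one,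
    single_one_dotProduct, col_apply]
  ring

theorem sin_sq_lt_cos_of_add_lt_pi_div_two {α β : ℝ} (hα : 0 ≤ α) (hβ : 0 ≤ β)
    (h : α + β < π / 2) : sin α ^ 2 < cos β := by
  have hsin_nonneg : 0 ≤ sin α := sin_nonneg_of_nonneg_of_le_pi hα (by linarith [pi_pos])
  have hsin_lt : sin α < cos β := by
    rw [← cos_pi_div_two_sub]
    exact cos_lt_cos_of_nonneg_of_le_pi hβ (by linarith) (by linarith)
  nlinarith [sin_le_one α]

namespace CSMatrix

variable (u v w : ℕ)

theorem isSymm : (CSMatrix u v w).IsSymm := by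
  ext i j
  fin_cases i <;> fin_cases j <;> rfl

theorem det_eq : (CSMatrix u v w).det =
    1 - cos (π / u) ^ 2 - cos (π / v) ^ 2 - cos (π / w) ^ 2 +
      cos (π / u) ^ 2 * cos (π / w) ^ 2 := by
  rw [det_succ_row_zero, Fin.sum_univ_four]
  simp only [CSMatrix, det_fin_three, of_apply, submatrix_apply, cons_val', cons_val_zero,
    cons_val_one, cons_val, cons_val_fin_one, Fin.succAbove, Fin.succ_zero_eq_one,
    Fin.succ_one_eq_two, Fin.reduceSucc, Fin.castSucc_zero, Fin.castSucc_one,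
    Fin.reduceCastSucc, Fin.reduceLT, Fin.lt_one_iff, Fin.reduceEq, ↓reduceIte, Fin.isValue,
    Fin.val_zero, Fin.val_one, Fin.val_two]
  ring

theorem adjugate_one_one : (CSMatrix u v w).adjugate 1 1 = 1 - cos (π / w) ^ 2 := by
  rw [adjugate_fin_succ_eq_det_submatrix]
  simp [CSMatrix, det_fin_three, Fin.succAbove, pow_succ]

theorem adjugate_one_two : (CSMatrix u v w).adjugate 1 2 = cos (π / v) := by
  rw [adjugate_fin_succ_eq_det_submatrix]
  simp [CSMatrix, det_fin_three, Fin.succAbove, pow_succ]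

theorem adjugate_two_two : (CSMatrix u v w).adjugate 2 2 = 1 - cos (π / u) ^ 2 := by
  rw [adjugate_fin_succ_eq_det_submatrix]
  simp [CSMatrix, det_fin_three, Fin.succAbove, pow_succ]

end CSMatrix

namespace Ainv

variable (u v w : ℕ)

theorem isSymm : (Ainv u v w).IsSymm := (CSMatrix.isSymm u v w).inv

theorem apply_eq_adjugate_div_det (i j : Fin 4) :
    Ainv u v w i j = (CSMatrix u v w).adjugate i j / (CSMatrix u v w).det := by
  rw [Ainv, inv_def, Matrix.smul_apply, Ring.inverse_eq_inv', smul_eq_mul, inv_mul_eq_div]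

theorem two_two_eq_one_one : Ainv u v u 2 2 = Ainv u v u 1 1 := by
  rw [apply_eq_adjugate_div_det, apply_eq_adjugate_div_det, CSMatrix.adjugate_one_one,
    CSMatrix.adjugate_two_two]

end Ainv

theorem midpoint_F12_proper_general (u v : ℕ)
    (huv : (1 : ℝ) / u + 1 / v < 1 / 2) :
    ip u v u (e 1 + e 2) (e 1 + e 2) = 2 * (Ainv u v u 1 1 + Ainv u v u 1 2) ∧
    ip u v u (e 1 + e 2) (e 1 + e 2) < 0 := by
  have hsc : sin (π / u) ^ 2 < cos (π / v) := by
    refine sin_sq_lt_cos_of_add_lt_pi_div_two (by positivity) (by positivity) ?_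
    calc π / u + π / v = π * (1 / u + 1 / v) := by ring
      _ < π * (1 / 2) := mul_lt_mul_of_pos_left huv pi_pos
      _ = π / 2 := by ring
  have hdet : (CSMatrix u v u).det =
      (sin (π / u) ^ 2 - cos (π / v)) * (sin (π / u) ^ 2 + cos (π / v)) := by
    rw [CSMatrix.det_eq]
    linear_combination (-(1 - cos (π / u) ^ 2 + sin (π / u) ^ 2)) * sin_sq_add_cos_sq (π / u)
  have hA : Ainv u v u 1 1 + Ainv u v u 1 2 = (sin (π / u) ^ 2 - cos (π / v))⁻¹ := by
    have hpos : 0 < sin (π / u) ^ 2 + cos (π / v) := by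
      linarith [sq_nonneg (sin (π / u))]
    rw [Ainv.apply_eq_adjugate_div_det, Ainv.apply_eq_adjugate_div_det,
      CSMatrix.adjugate_one_one, CSMatrix.adjugate_one_two, hdet, ← sin_sq, ← add_div,
      div_mul_cancel_right₀ hpos.ne']
  have hip : ip u v u (e 1 + e 2) (e 1 + e 2) = 2 * (Ainv u v u 1 1 + Ainv u v u 1 2) := by
    rw [ip, e, e, add_single_dotProduct_mulVec_add_single, (Ainv.isSymm u v u).apply 1 2,
      Ainv.two_two_eq_one_one]
    ring
  refine ⟨hip, ?_⟩
  rw [hip, hA]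
  exact mul_neg_of_pos_of_neg two_pos (inv_lt_zero.mpr (by linarith))

theorem midpoint_F12_proper (u v : ℕ) (hu : 3 ≤ u) (hv : 3 ≤ v)
    (huv : (1 : ℝ) / u + 1 / v < 1 / 2) :
    ip u v u (e 1 + e 2) (e 1 + e 2) = 2 * (Ainv u v u 1 1 + Ainv u v u 1 2) ∧
    ip u v u (e 1 + e 2) (e 1 + e 2) < 0 :=
  midpoint_F12_proper_general u v huv
end

section
/- Let u, v be natural numbers with u, v ≥ 3 and 1/u + 1/v < 1/2, set w = u, and let A := b(u,v,u)⁻¹. Then the points Q := e₂ − (A₂₃/A₃₃)e₃ and E := e₁ − (A₁₃/A₃₃)e₃ are proper points of the model: ⟨Q,Q⟩ < 0 and ⟨E,E⟩ < 0. -/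
open Real Matrix

/-- Explicit inverse of the orthoscheme matrix `b(u,v,u)` (in variables `a,c`). -/
theorem invB_aux (a c : ℝ) (hd : ((1-a^2)^2 - c^2) ≠ 0) :
    (!![1,-a,0,0;-a,1,-c,0;0,-c,1,-a;0,0,-a,1] : Matrix (Fin 4) (Fin 4) ℝ)⁻¹ =
    (1/((1-a^2)^2-c^2)) • !![1-a^2-c^2, a*(1-a^2), a*c, a^2*c;
                             a*(1-a^2), 1-a^2, c, a*c;
                             a*c, c, 1-a^2, a*(1-a^2);
                             a^2*c, a*c, a*(1-a^2), 1-a^2-c^2] := by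
  apply Matrix.inv_eq_right_inv
  ext i j
  fin_cases i <;> fin_cases j <;>
    simp [Matrix.mul_apply, Fin.sum_univ_four] <;> field_simp <;> ring

/-- Expansion of the quadratic form at `e i - r • e 3`. -/
theorem ip_expand (M : Matrix (Fin 4) (Fin 4) ℝ) (r : ℝ) (i : Fin 4) :
    ((Pi.single i 1 : Fin 4 → ℝ) - r • (Pi.single 3 1 : Fin 4 → ℝ)) ⬝ᵥ
      M.mulVec ((Pi.single i 1 : Fin 4 → ℝ) - r • (Pi.single 3 1 : Fin 4 → ℝ)) =
    M i i - r * M i 3 - r * M 3 i + r^2 * M 3 3 := by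
  simp [Matrix.mulVec_sub, Matrix.mulVec_smul, sub_dotProduct,
    smul_dotProduct, dotProduct_sub, dotProduct_smul,
    Matrix.mulVec_single, single_dotProduct]
  ring

set_option maxHeartbeats 1000000 in
theorem Q_and_E_proper (u v : ℕ) (hu : 3 ≤ u) (hv : 3 ≤ v)
    (huv : (1 : ℝ) / u + 1 / v < 1 / 2) :
    ip u v u (e 2 - (Ainv u v u 2 3 / Ainv u v u 3 3) • e 3)
        (e 2 - (Ainv u v u 2 3 / Ainv u v u 3 3) • e 3) < 0 ∧
    ip u v u (e 1 - (Ainv u v u 1 3 / Ainv u v u 3 3) • e 3)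
        (e 1 - (Ainv u v u 1 3 / Ainv u v u 3 3) • e 3) < 0 := by
  have hu0 : (0:ℝ) < u := by positivity
  have hv0 : (0:ℝ) < v := by positivity
  have hu3 : (3:ℝ) ≤ u := by exact_mod_cast hu
  have hv3 : (3:ℝ) ≤ v := by exact_mod_cast hv
  have hpi := Real.pi_pos
  have hau : Real.pi / u ≤ Real.pi / 3 :=
    div_le_div_of_nonneg_left hpi.le (by norm_num) hu3
  have hav : Real.pi / v ≤ Real.pi / 3 :=
    div_le_div_of_nonneg_left hpi.le (by norm_num) hv3
  have h3lt2 : Real.pi / 3 < Real.pi / 2 :=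
    div_lt_div_of_pos_left hpi (by norm_num) (by norm_num)
  have hu2 : Real.pi / u < Real.pi / 2 := hau.trans_lt h3lt2
  have hv2 : Real.pi / v < Real.pi / 2 := hav.trans_lt h3lt2
  have hup : 0 < Real.pi / u := by positivity
  have hvp : 0 < Real.pi / v := by positivity
  set a := Real.cos (Real.pi / u) with ha
  set c := Real.cos (Real.pi / v) with hc
  have hcu : 0 < a := Real.cos_pos_of_mem_Ioo ⟨by linarith, hu2⟩
  have hcv : 0 < c := Real.cos_pos_of_mem_Ioo ⟨by linarith, hv2⟩
  have hcu1 : a < 1 := by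
    have := Real.cos_lt_cos_of_nonneg_of_le_pi le_rfl (by linarith) hup
    simpa [ha] using this
  have hcv1 : c < 1 := by
    have := Real.cos_lt_cos_of_nonneg_of_le_pi le_rfl (by linarith) hvp
    simpa [hc] using this
  have hkey : Real.pi / u < Real.pi/2 - Real.pi/v := by
    have h2 : Real.pi/u + Real.pi/v < Real.pi/2 := by
      have := mul_lt_mul_of_pos_left huv hpi
      calc Real.pi/u + Real.pi/v = Real.pi * (1/u + 1/v) := by ring
        _ < Real.pi * (1/2) := this
        _ = Real.pi/2 := by ring
    linarith
  have hmono : Real.cos (Real.pi/2 - Real.pi/v) < a :=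
    Real.cos_lt_cos_of_nonneg_of_le_pi hup.le (by linarith) hkey
  rw [Real.cos_pi_div_two_sub] at hmono
  have hsv : 0 ≤ Real.sin (Real.pi/v) :=
    Real.sin_nonneg_of_nonneg_of_le_pi hvp.le (by linarith)
  have hid := Real.sin_sq_add_cos_sq (Real.pi/v)
  have hsum : 1 < a^2 + c^2 := by nlinarith
  -- determinant and minor signs
  have hD3 : 1 - a^2 - c^2 < 0 := by nlinarith
  have h1a : 0 < 1 - a^2 := by nlinarith
  have h1c : 1 - a^2 < c^2 := by linarith
  have hdlt : (1-a^2)^2 - c^2 < 0 := by nlinarith [mul_lt_mul_of_pos_left h1c h1a, sq_nonneg c]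
  have hdne : ((1-a^2)^2 - c^2) ≠ 0 := hdlt.ne
  -- explicit inverse
  have hB : CSMatrix u v u =
      (!![1,-a,0,0;-a,1,-c,0;0,-c,1,-a;0,0,-a,1] : Matrix (Fin 4) (Fin 4) ℝ) := rfl
  have hA : Ainv u v u =
      (1/((1-a^2)^2-c^2)) • !![1-a^2-c^2, a*(1-a^2), a*c, a^2*c;
                               a*(1-a^2), 1-a^2, c, a*c;
                               a*c, c, 1-a^2, a*(1-a^2);
                               a^2*c, a*c, a*(1-a^2), 1-a^2-c^2] := by
    rw [Ainv, hB]; exact invB_aux a c hdne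
  set d : ℝ := (1-a^2)^2 - c^2 with hd
  have h33 : Ainv u v u 3 3 = (1/d) * (1-a^2-c^2) := by rw [hA]; simp
  have h23 : Ainv u v u 2 3 = (1/d) * (a*(1-a^2)) := by rw [hA]; simp
  have h32 : Ainv u v u 3 2 = (1/d) * (a*(1-a^2)) := by rw [hA]; simp
  have h22 : Ainv u v u 2 2 = (1/d) * (1-a^2) := by rw [hA]; simp
  have h13 : Ainv u v u 1 3 = (1/d) * (a*c) := by rw [hA]; simp
  have h31 : Ainv u v u 3 1 = (1/d) * (a*c) := by rw [hA]; simp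
  have h11 : Ainv u v u 1 1 = (1/d) * (1-a^2) := by rw [hA]; simp
  have hQ : ip u v u (e 2 - (Ainv u v u 2 3 / Ainv u v u 3 3) • e 3)
        (e 2 - (Ainv u v u 2 3 / Ainv u v u 3 3) • e 3) = (1-a^2)/(1-a^2-c^2) := by
    rw [ip, e, e, ip_expand, h22, h23, h32, h33]
    have hDne : (1 - a^2 - c^2) ≠ 0 := hD3.ne
    field_simp
    ring
  have hE : ip u v u (e 1 - (Ainv u v u 1 3 / Ainv u v u 3 3) • e 3)
        (e 1 - (Ainv u v u 1 3 / Ainv u v u 3 3) • e 3) = 1/(1-a^2-c^2) := by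
    rw [ip, e, e, ip_expand, h11, h13, h31, h33]
    have hDne : (1 - a^2 - c^2) ≠ 0 := hD3.ne
    field_simp
    ring
  exact ⟨hQ ▸ div_neg_of_pos_of_neg h1a hD3, hE ▸ div_neg_of_pos_of_neg one_pos hD3⟩
end

section
/- Let u, v be natural numbers with u, v ≥ 3 and 1/u + 1/v < 1/2, set w = u, and let A := b(u,v,u)⁻¹. Then for every real h > 0, the point H := (e₀ + e₃) + h·(e₁ + e₂) on the half-turn axis satisfies ⟨H, H⟩ < 0; that is, every such point of the axis h = F₀₃F₁₂ is a proper (interior) point. -/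
/-!
With `a = cos (π/u)` and `c = cos (π/v)`, the matrix `b(u,v,u)` is symmetric under reversing the
indices, so the solution of `b y = H` for `H = (1,h,h,1)` is again palindromic and gives
`⟨H,H⟩ = H ⬝ y = 2 + 2 (h+a)² / (1 - a² - c)`. The condition `1/u + 1/v < 1/2` says
`π/u + π/v < π/2`, hence `sin (π/u) < cos (π/v)`, so the denominator `sin² (π/u) - cos (π/v)`
is negative, while `2 (1 - a² - c) + 2 (h+a)² = 2 (1 - c + h² + 2 h a)` is positive.
-/

open Real Matrix

noncomputable def palindromicSchlafliMatrix (a c : ℝ) : Matrix (Fin 4) (Fin 4) ℝ :=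
  !![1, -a, 0, 0; -a, 1, -c, 0; 0, -c, 1, -a; 0, 0, -a, 1]

lemma CSMatrix_self_right (u v : ℕ) :
    CSMatrix u v u = palindromicSchlafliMatrix (cos (π / u)) (cos (π / v)) :=
  rfl

lemma det_palindromicSchlafliMatrix (a c : ℝ) :
    (palindromicSchlafliMatrix a c).det = (1 - a ^ 2 - c) * (1 - a ^ 2 + c) := by
  simp [palindromicSchlafliMatrix, det_succ_row_zero, Fin.sum_univ_succ, Fin.succAbove]
  ring

lemma palindromicSchlafliMatrix_mulVec (a c h : ℝ) (hD : 1 - a ^ 2 - c ≠ 0) :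
    let t := (h + a) / (1 - a ^ 2 - c)
    palindromicSchlafliMatrix a c *ᵥ ![1 + a * t, t, t, 1 + a * t] = ![1, h, h, 1] := by
  funext i
  fin_cases i <;>
    simp [palindromicSchlafliMatrix, mulVec, dotProduct, Fin.sum_univ_four] <;>
    field_simp <;> ring

lemma inv_palindromicSchlafliMatrix_quadForm (a c h : ℝ) (hD : 1 - a ^ 2 - c ≠ 0)
    (hD' : 1 - a ^ 2 + c ≠ 0) :
    ![1, h, h, 1] ⬝ᵥ (palindromicSchlafliMatrix a c)⁻¹ *ᵥ ![1, h, h, 1] =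
      2 + 2 * (h + a) ^ 2 / (1 - a ^ 2 - c) := by
  have hdet : IsUnit (palindromicSchlafliMatrix a c).det := by
    rw [det_palindromicSchlafliMatrix]
    exact (mul_ne_zero hD hD').isUnit
  have : Invertible (palindromicSchlafliMatrix a c) := invertibleOfIsUnitDet _ hdet
  rw [inv_mulVec_eq_vec (palindromicSchlafliMatrix_mulVec a c h hD).symm]
  simp only [dotProduct, Fin.sum_univ_four, Matrix.cons_val]
  field_simp
  ring

lemma two_add_two_mul_sq_div_neg {a c h : ℝ} (ha : 0 ≤ a) (hc : c ≤ 1) (hh : 0 < h)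
    (hD : 1 - a ^ 2 - c < 0) : 2 + 2 * (h + a) ^ 2 / (1 - a ^ 2 - c) < 0 := by
  rw [add_div' _ _ _ hD.ne]
  exact div_neg_of_pos_of_neg (by nlinarith [mul_nonneg hh.le ha]) hD

lemma one_sub_cos_sq_lt_cos_of_add_lt_pi_div_two {α β : ℝ} (hα : 0 ≤ α) (hβ : 0 ≤ β)
    (h : α + β < π / 2) : 1 - cos α ^ 2 < cos β := by
  have hsin : sin α < cos β := by
    rw [← cos_pi_div_two_sub]
    exact cos_lt_cos_of_nonneg_of_le_pi hβ (by linarith [pi_pos]) (by linarith)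
  have hsin₀ : 0 ≤ sin α := sin_nonneg_of_nonneg_of_le_pi hα (by linarith [pi_pos])
  nlinarith [sin_sq_add_cos_sq α, sin_le_one α]

lemma axis_point_eq (h : ℝ) : (e 0 + e 3) + h • (e 1 + e 2) = ![1, h, h, 1] := by
  funext i
  fin_cases i <;> simp [e]

theorem axis_points_proper_general (u v : ℕ)
    (huv : (1 : ℝ) / u + 1 / v < 1 / 2) :
    ∀ h : ℝ, 0 < h →
      ip u v u ((e 0 + e 3) + h • (e 1 + e 2)) ((e 0 + e 3) + h • (e 1 + e 2)) < 0 := by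
  intro h hh
  have hsum : π / u + π / v < π / 2 := by
    have := mul_lt_mul_of_pos_left huv pi_pos
    simpa only [mul_add, mul_one_div] using this
  have hα : 0 ≤ π / u := by positivity
  have hβ : 0 ≤ π / v := by positivity
  have hD := one_sub_cos_sq_lt_cos_of_add_lt_pi_div_two hα hβ hsum
  have ha : 0 ≤ cos (π / u) := cos_nonneg_of_mem_Icc ⟨by linarith [pi_pos], by linarith⟩
  have ha₁ := cos_sq_le_one (π / u)
  rw [axis_point_eq, ip, Ainv, CSMatrix_self_right,
    inv_palindromicSchlafliMatrix_quadForm _ _ _ (by linarith) (by linarith)]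
  exact two_add_two_mul_sq_div_neg ha (cos_le_one _) hh (by linarith)

theorem axis_points_proper (u v : ℕ) (hu : 3 ≤ u) (hv : 3 ≤ v)
    (huv : (1 : ℝ) / u + 1 / v < 1 / 2) :
    ∀ h : ℝ, 0 < h →
      ip u v u ((e 0 + e 3) + h • (e 1 + e 2)) ((e 0 + e 3) + h • (e 1 + e 2)) < 0 :=
  axis_points_proper_general u v huv
end
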